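/- arXiv:2503.12598 — 4 statements merged into one kernel-verified Lean document; each statement's English description precedes it below -/
import Mathlib

section
/- Let T be a bounded linear operator on a complex Hilbert space H. Then T is positive if and only if T² is positive and Re T ≥ 0. -/
section Aux
variable {H : Type*} [NormedAddCommGroup H] [InnerProductSpace ℂ H] [CompleteSpace H]

noncomputable def commSubalg (a b : H →L[ℂ] H) (ha : IsSelfAdjoint a) :
    Subalgebra ℝ C(spectrum ℝ a, ℝ) where
  carrier := {g | Commute (cfcHom ha (R := ℝ) g) b}
  mul_mem' {x y} hx hy := by
    show Commute (cfcHom ha (R := ℝ) (x * y)) b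
    rw [map_mul]
    exact Commute.mul_left hx hy
  add_mem' {x y} hx hy := by
    show Commute (cfcHom ha (R := ℝ) (x + y)) b
    rw [map_add]
    exact Commute.add_left hx hy
  algebraMap_mem' r := by
    show Commute (cfcHom ha (R := ℝ) (algebraMap ℝ C(spectrum ℝ a, ℝ) r)) b
    rw [AlgHomClass.commutes]
    exact Algebra.commutes r b

lemma commute_cfcHom_aux (a b : H →L[ℂ] H) (ha : IsSelfAdjoint a) (hab : Commute a b)
    (g : C(spectrum ℝ a, ℝ)) : Commute (cfcHom ha (R := ℝ) g) b := by
  set S := commSubalg a b ha with hS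
  have hX : (ContinuousMap.id ℝ).restrict (spectrum ℝ a) ∈ S := by
    show Commute (cfcHom ha (R := ℝ) _) b
    rw [cfcHom_id ha]
    exact hab
  have hsep : S.SeparatesPoints := by
    intro x y hxy
    refine ⟨_, ⟨(ContinuousMap.id ℝ).restrict (spectrum ℝ a), hX, rfl⟩, ?_⟩
    simpa using Subtype.coe_injective.ne hxy
  have htop := ContinuousMap.subalgebra_topologicalClosure_eq_top_of_separatesPoints S hsep
  have hclosed : IsClosed (S : Set C(spectrum ℝ a, ℝ)) := by
    have heq : (S : Set C(spectrum ℝ a, ℝ))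
        = {g | cfcHom ha (R := ℝ) g * b = b * cfcHom ha (R := ℝ) g} := rfl
    rw [heq]
    exact isClosed_eq ((cfcHom_continuous ha).mul continuous_const)
      (continuous_const.mul (cfcHom_continuous ha))
  have hg : g ∈ S.topologicalClosure := htop ▸ Algebra.mem_top
  have hg' : g ∈ closure (S : Set C(spectrum ℝ a, ℝ)) := hg
  rwa [hclosed.closure_eq] at hg'

lemma commute_cfc_real (a b : H →L[ℂ] H) (hab : Commute a b) (f : ℝ → ℝ) :
    Commute (cfc f a) b := by
  refine cfc_cases (fun x => Commute x b) a f (Commute.zero_left b) fun hf ha' => ?_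
  exact commute_cfcHom_aux a b ha' hab _

end Aux

set_option maxHeartbeats 1000000 in
set_option synthInstance.maxHeartbeats 1000000 in
/-- `T` is positive if and only if `T²` is positive and `Re T ≥ 0`. -/
theorem positive_iff_sq_positive_and_accretive
    {H : Type*} [NormedAddCommGroup H] [InnerProductSpace ℂ H] [CompleteSpace H]
    (T : H →L[ℂ] H) :
    T.IsPositive ↔ ((T ^ 2).IsPositive ∧ ∀ x : H, 0 ≤ (inner ℂ (T x) x : ℂ).re) := by
  constructor
  · intro hT
    refine ⟨?_, fun x => ?_⟩
    · rw [← ContinuousLinearMap.nonneg_iff_isPositive]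
      calc (0 : H →L[ℂ] H) ≤ star T * T := star_mul_self_nonneg T
        _ = T ^ 2 := by rw [hT.isSelfAdjoint.star_eq, sq]
    · simpa [ContinuousLinearMap.reApplyInnerSelf] using hT.2 x
  · rintro ⟨h2, hre⟩
    -- It suffices to show `T` is selfadjoint.
    have key : IsSelfAdjoint T := by
      have hu2 : star T * star T = T * T := by
        have h := h2.isSelfAdjoint.star_eq
        rw [star_pow] at h
        rw [← sq, h, sq]
      set A := T + star T with hA_def
      set D := T - star T with hD_def
      have hAsa : IsSelfAdjoint A := by
        rw [hA_def]
        simp [IsSelfAdjoint, star_add, star_star, add_comm]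
      have hDsa : star D = -D := by
        rw [hD_def, star_sub, star_star, neg_sub]
      -- A is positive
      have hA : (0 : H →L[ℂ] H) ≤ A := by
        rw [ContinuousLinearMap.nonneg_iff_isPositive]
        refine ⟨ContinuousLinearMap.isSelfAdjoint_iff_isSymmetric.mp hAsa, fun x => ?_⟩
        have hx := hre x
        have hsym : (inner ℂ ((star T) x) x : ℂ).re = (inner ℂ (T x) x : ℂ).re := by
          rw [ContinuousLinearMap.star_eq_adjoint, ContinuousLinearMap.adjoint_inner_left,
            ← inner_conj_symm x (T x), Complex.conj_re]
        show 0 ≤ RCLike.re (inner ℂ (A x) x : ℂ)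
        rw [hA_def]
        simp only [ContinuousLinearMap.add_apply, inner_add_left, map_add,
          RCLike.re_to_complex]
        rw [hsym]
        linarith
      -- anticommutation
      have h1 : A * D = star T * T - T * star T := by
        have e : A * D = T * T - star T * star T + (star T * T - T * star T) := by
          rw [hA_def, hD_def]; noncomm_ring
        rw [e, hu2]; abel
      have h1' : D * A = T * star T - star T * T := by
        have e : D * A = T * T - star T * star T + (T * star T - star T * T) := by
          rw [hA_def, hD_def]; noncomm_ring
        rw [e, hu2]; abel
      have hanti : A * D = -(D * A) := by rw [h1, h1', neg_sub]
      have hDA : D * A = -(A * D) := by rw [hanti, neg_neg]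
      -- A commutes with D*D
      have hAD2 : A * (D * D) = (D * D) * A := by
        calc A * (D * D) = (A * D) * D := by rw [mul_assoc]
          _ = -((D * A) * D) := by rw [hanti, neg_mul]
          _ = -(D * (A * D)) := by rw [mul_assoc]
          _ = D * (D * A) := by rw [hanti, mul_neg, neg_neg]
          _ = (D * D) * A := by rw [mul_assoc]
      set E := -(D * D) with hE_def
      have hE : (0 : H →L[ℂ] H) ≤ E := by
        have h := star_mul_self_nonneg D
        rwa [hDsa, neg_mul, ← hE_def] at h
      have hEsa : IsSelfAdjoint E := .of_nonneg hE
      have hcommAE : Commute A E := by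
        rw [hE_def]
        exact Commute.neg_right hAD2
      -- the square root of A
      set C := CFC.sqrt A with hC_def
      have hC0 : (0 : H →L[ℂ] H) ≤ C := CFC.sqrt_nonneg A
      have hCsa : IsSelfAdjoint C := .of_nonneg hC0
      have hCC : C * C = A := CFC.sqrt_mul_sqrt_self A hA
      have hCE : Commute C E := by
        rw [hC_def, CFC.sqrt_eq_cfc, cfc_nnreal_eq_real _ A hA]
        exact commute_cfc_real A E hcommAE _
      -- 0 ≤ A * E
      have hAEnonneg : (0 : H →L[ℂ] H) ≤ A * E := by
        have h := star_left_conjugate_nonneg hE C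
        have heq : star C * E * C = A * E := by
          calc star C * E * C = (C * E) * C := by rw [hCsa.star_eq]
            _ = (E * C) * C := by rw [hCE.eq]
            _ = E * (C * C) := by rw [mul_assoc]
            _ = E * A := by rw [hCC]
            _ = A * E := hcommAE.eq.symm
        rwa [heq] at h
      -- A * E ≤ 0
      have hAEnonpos : A * E ≤ 0 := by
        have h := star_left_conjugate_nonneg hA D
        have heq : star D * A * D = -(A * E) := by
          calc star D * A * D = -((D * A) * D) := by rw [hDsa, neg_mul, neg_mul]
            _ = -((-(A * D)) * D) := by rw [hDA]
            _ = (A * D) * D := by rw [neg_mul, neg_neg]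
            _ = A * (D * D) := by rw [mul_assoc]
            _ = -(A * E) := by rw [hE_def, mul_neg, neg_neg]
        rw [heq] at h
        exact neg_nonneg.mp h
      have hAE0 : A * E = 0 := le_antisymm hAEnonpos hAEnonneg
      have hADD0 : A * (D * D) = 0 := by
        have e : A * (D * D) = -(A * E) := by rw [hE_def, mul_neg, neg_neg]
        rw [e, hAE0, neg_zero]
      -- A * A + D * D = 4 T² ≥ 0
      have hsum : A * A + D * D = T * T + T * T + (T * T + T * T) := by
        have e : A * A + D * D = T * T + T * T + (star T * star T + star T * star T) := by
          rw [hA_def, hD_def]; noncomm_ring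
        rw [e, hu2]
      have hT2 : (0 : H →L[ℂ] H) ≤ T * T := by
        have := (ContinuousLinearMap.nonneg_iff_isPositive _).mpr h2
        rwa [sq] at this
      have hsum_nonneg : (0 : H →L[ℂ] H) ≤ A * A + D * D := by
        rw [hsum]
        exact add_nonneg (add_nonneg hT2 hT2) (add_nonneg hT2 hT2)
      -- conjugate by D
      have hDAAD : D * (A * A) * D = 0 := by
        calc D * (A * A) * D = (D * A) * (A * D) := by noncomm_ring
          _ = (-(A * D)) * (A * D) := by rw [hDA]
          _ = -(A * ((D * A) * D)) := by noncomm_ring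
          _ = -(A * ((-(A * D)) * D)) := by rw [hDA]
          _ = A * (A * (D * D)) := by noncomm_ring
          _ = A * 0 := by rw [hADD0]
          _ = 0 := mul_zero A
      have h5 := star_left_conjugate_nonneg hsum_nonneg D
      have h6 : star D * (A * A + D * D) * D = -(E * E) := by
        rw [hDsa]
        have expand : (-D) * (A * A + D * D) * D
            = -(D * (A * A) * D) + -(D * (D * D) * D) := by noncomm_ring
        have hDDDD : D * (D * D) * D = E * E := by rw [hE_def]; noncomm_ring
        rw [expand, hDAAD, hDDDD, neg_zero, zero_add]
      rw [h6] at h5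
      have hEEnonneg : (0 : H →L[ℂ] H) ≤ E * E := by
        have h := star_mul_self_nonneg E
        rwa [hEsa.star_eq] at h
      have hEE0 : E * E = 0 := le_antisymm (neg_nonneg.mp h5) hEEnonneg
      have hE0 : E = 0 := by
        have : star E * E = 0 := by rw [hEsa.star_eq]; exact hEE0
        exact (CStarRing.star_mul_self_eq_zero_iff E).mp this
      have hD0 : D = 0 := by
        have : star D * D = 0 := by rw [hDsa, neg_mul, ← hE_def, hE0]
        exact (CStarRing.star_mul_self_eq_zero_iff D).mp this
      have : T - star T = 0 := by rw [← hD_def]; exact hD0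
      have hTs : star T = T := (sub_eq_zero.mp this).symm
      exact hTs
    exact ⟨ContinuousLinearMap.isSelfAdjoint_iff_isSymmetric.mp key, fun x => by simpa [ContinuousLinearMap.reApplyInnerSelf] using hre x⟩
end

section
/- Let T be a bounded linear operator on a complex Hilbert space H. If T is quasinormal (i.e., TT*T = T*T²) and T² is normal, then T is normal. -/
open ContinuousLinearMap

/-- If `T` is quasinormal (`TT*T = T*T²`) and `T²` is normal, then `T` is normal. -/
theorem normal_of_quasinormal_of_sq_normal
    {H : Type*} [NormedAddCommGroup H] [InnerProductSpace ℂ H] [CompleteSpace H]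
    (T : H →L[ℂ] H)
    (hquasi : T * ContinuousLinearMap.adjoint T * T = ContinuousLinearMap.adjoint T * T ^ 2)
    (h2 : IsStarNormal (T ^ 2)) :
    IsStarNormal T := by
  set S := ContinuousLinearMap.adjoint T with hS
  set D : H →L[ℂ] H := S * T - T * S with hD
  have hDT : D * T = 0 := by
    rw [hD, sub_mul, hquasi, mul_assoc, ← sq, sub_self]
  have h2' : S ^ 2 * T ^ 2 = T ^ 2 * S ^ 2 := by
    have := h2.star_comm_self
    simpa [hS, star_pow, star_eq_adjoint, commute_iff_eq] using this
  have hA2 : (S * T) * (S * T) = T ^ 2 * S ^ 2 := by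
    rw [mul_assoc, ← mul_assoc T S T, hquasi, ← mul_assoc, ← sq, h2']
  have hker : ∀ z, S z = 0 → D z = 0 := by
    intro z hz
    have h0 : ((S * T) * (S * T)) z = 0 := by
      rw [hA2]
      simp [mul_apply, pow_two, hz]
    have key : (inner ℂ ((S * T) z) ((S * T) z) : ℂ) = 0 := by
      have e1 : (inner ℂ ((S * T) z) ((S * T) z) : ℂ)
          = inner ℂ (((S * T) * (S * T)) z) z := by
        calc (inner ℂ ((S * T) z) ((S * T) z) : ℂ)
            = inner ℂ (T ((S * T) z)) (T z) := by
              show inner ℂ (adjoint T (T z)) (adjoint T (T z)) = inner ℂ (T (adjoint T (T z))) (T z)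
              rw [ContinuousLinearMap.adjoint_inner_right]
          _ = inner ℂ (((S * T) * (S * T)) z) z := by
              show inner ℂ (T (adjoint T (T z))) (T z) = inner ℂ (adjoint T (T (adjoint T (T z)))) z
              rw [ContinuousLinearMap.adjoint_inner_left]
      rw [e1, h0, inner_zero_left]
    have hSTz : (S * T) z = 0 := inner_self_eq_zero.mp key
    have : D z = (S * T) z - T (S z) := rfl
    rw [this, hSTz, hz, map_zero, sub_zero]
  have hall : ∀ x, D x = 0 := by
    intro x
    set K := (LinearMap.range (T : H →ₗ[ℂ] H)).topologicalClosure with hK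
    obtain ⟨y, hy, z, hz, rfl⟩ := K.exists_add_mem_mem_orthogonal x
    have hyD : D y = 0 := by
      have hle : K ≤ LinearMap.ker (D : H →ₗ[ℂ] H) := by
        apply Submodule.topologicalClosure_minimal
        · rintro _ ⟨u, rfl⟩
          have := ContinuousLinearMap.ext_iff.mp hDT u
          simpa [mul_apply] using this
        · exact ContinuousLinearMap.isClosed_ker D
      exact hle hy
    have hzS : S z = 0 := by
      have hm : T (S z) ∈ K := Submodule.le_topologicalClosure _ ⟨S z, rfl⟩
      have h1 : (inner ℂ (T (S z)) z : ℂ) = 0 := (K.mem_orthogonal z).mp hz (T (S z)) hm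
      have h3 : (inner ℂ (S z) (S z) : ℂ) = 0 := by
        rw [hS, ContinuousLinearMap.adjoint_inner_left, ← inner_conj_symm, h1, map_zero]
      exact inner_self_eq_zero.mp h3
    rw [map_add, hyD, hker z hzS, add_zero]
  have hDzero : D = 0 := ContinuousLinearMap.ext fun x => by simpa using hall x
  have hc : S * T = T * S := by rwa [hD, sub_eq_zero] at hDzero
  refine ⟨?_⟩
  rw [ContinuousLinearMap.star_eq_adjoint, ← hS]
  exact hc
end

section
/- Let T be a bounded linear operator on a complex Hilbert space H. If T² and T³ are normal and ran T = ran T², then T is normal. -/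
open NormedSpace

section Fuglede

variable {A : Type*} [NormedRing A] [StarRing A] [CStarRing A]
  [NormedAlgebra ℂ A] [StarModule ℂ A] [CompleteSpace A]

/-- **Fuglede's theorem**: if `N` is normal and commutes with `T`,
then `star N` also commutes with `T`. -/
lemma fuglede_commute {N T : A} (hN : IsStarNormal N) (h : Commute N T) :
    Commute (star N) T := by
  letI : NormedAlgebra ℚ A := .restrictScalars ℚ ℂ A
  have hNN : Commute N (star N) := hN.star_comm_self.symm
  -- the entire function `g z = exp (-(z • N*)) * T * exp (z • N*)`
  set g : ℂ → A := fun z => exp (z • (-star N)) * T * exp (z • star N) with hg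
  have dg : Differentiable ℂ g := by
    have d1 : Differentiable ℂ fun z : ℂ => exp (z • (-star N)) :=
      fun t => (hasDerivAt_exp_smul_const (-star N) t).differentiableAt
    have d2 : Differentiable ℂ fun z : ℂ => exp (z • star N) :=
      fun t => (hasDerivAt_exp_smul_const (star N) t).differentiableAt
    exact (d1.mul (differentiable_const T)).mul d2
  have hbdd : ∀ z : ℂ, ‖g z‖ = ‖T‖ := by
    intro z
    set a : A := (starRingEnd ℂ z) • N with ha
    set b : A := z • star N with hb
    have hab : Commute a b := (hNN.smul_left _).smul_right _
    have hcomm1 : Commute a T := h.smul_left _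
    -- `T = exp a * T * exp (-a)`
    have hTconj : exp a * T * exp (-a) = T := by
      have h2 : exp a * exp (-a) = 1 := by
        rw [← exp_add_of_commute (Commute.refl a).neg_right, add_neg_cancel, exp_zero]
      calc exp a * T * exp (-a)
          = T * (exp a * exp (-a)) := by
            rw [(hcomm1.exp_left).eq, mul_assoc]
        _ = T := by rw [h2, mul_one]
    -- the skew-adjoint element `w = a - b`
    set w : A := a - b with hw
    have hws : w ∈ skewAdjoint A := by
      rw [skewAdjoint.mem_iff]
      have h1 : star a = b := by simp [ha, hb, star_smul]
      have h2 : star b = a := by simp [ha, hb, star_smul]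
      rw [hw, star_sub, h1, h2, neg_sub]
    have hu : exp w ∈ unitary A := exp_mem_unitary_of_mem_skewAdjoint hws
    have key : g z = exp w * T * star (exp w) := by
      have hstar : star (exp w) = exp (-w) := by
        rw [star_exp, skewAdjoint.mem_iff.mp hws]
      have e1 : exp (-b) * exp a = exp w := by
        rw [← exp_add_of_commute hab.symm.neg_left, neg_add_eq_sub]
      have e2 : exp (-a) * exp b = exp (-w) := by
        rw [← exp_add_of_commute hab.neg_left, hw, neg_sub, neg_add_eq_sub]
      have hzb : z • (-star N) = -b := by rw [hb, smul_neg]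
      rw [hstar, hg]
      calc exp (z • (-star N)) * T * exp b
          = exp (-b) * (exp a * T * exp (-a)) * exp b := by rw [hTconj, hzb]
        _ = (exp (-b) * exp a) * T * (exp (-a) * exp b) := by
            simp only [mul_assoc]
        _ = exp w * T * exp (-w) := by rw [e1, e2, mul_assoc]
    rw [key, mul_assoc,
      CStarRing.norm_coe_unitary_mul ⟨_, hu⟩ (T * star (exp w)),
      CStarRing.norm_mul_coe_unitary T ⟨_, Unitary.star_mem hu⟩]
  -- Liouville's theorem: `g` is constant
  have hrange : Bornology.IsBounded (Set.range g) := by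
    rw [Metric.isBounded_iff_subset_closedBall 0]
    exact ⟨‖T‖, by rintro y ⟨z, rfl⟩; simp [Metric.mem_closedBall, dist_zero_right, hbdd z]⟩
  have hconst : ∀ z : ℂ, g z = g 0 := fun z => dg.apply_eq_apply_of_bounded hrange z 0
  have hcomm : ∀ z : ℂ, T * exp (z • star N) = exp (z • star N) * T := by
    intro z
    have h0 : g 0 = T := by simp [hg]
    have hz := (hconst z).trans h0
    simp only [hg] at hz
    -- `exp (z • N*) * exp (z • -N*) = 1`
    have hinv : exp (z • star N) * exp (z • (-star N)) = 1 := by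
      rw [← exp_add_of_commute (((Commute.refl (star N)).neg_right.smul_left _).smul_right _)]
      simp [smul_neg]
    calc T * exp (z • star N)
        = (exp (z • star N) * exp (z • (-star N))) * T * exp (z • star N) := by
          rw [hinv, one_mul]
      _ = exp (z • star N) * (exp (z • (-star N)) * T * exp (z • star N)) := by
          simp only [mul_assoc]
      _ = exp (z • star N) * T := by rw [hz]
  -- differentiate at `0` to extract `T * N* = N* * T`
  have hFG : (fun z : ℂ => T * exp (z • star N)) = fun z => exp (z • star N) * T :=
    funext hcomm
  have hd1 : HasDerivAt (fun z : ℂ => T * exp (z • star N))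
      (T * (exp ((0:ℂ) • star N) * star N)) 0 :=
    (hasDerivAt_exp_smul_const (star N) 0).const_mul T
  have hd2 : HasDerivAt (fun z : ℂ => exp (z • star N) * T)
      ((star N * exp ((0:ℂ) • star N)) * T) 0 :=
    (hasDerivAt_exp_smul_const' (star N) 0).mul_const T
  rw [hFG] at hd1
  have := hd1.unique hd2
  simp only [zero_smul, exp_zero, mul_one, one_mul] at this
  exact this.symm

end Fuglede
open NormedSpace in
/-- For a normal operator `A`, if `A (A y) = 0` then `A y = 0`. -/
lemma normal_apply_apply_eq_zero {H : Type*} [NormedAddCommGroup H] [InnerProductSpace ℂ H]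
    [CompleteSpace H] {A : H →L[ℂ] H} (hA : IsStarNormal A) {y : H} (h : A (A y) = 0) :
    A y = 0 := by
  have hc : star A * A = A * star A := hA.star_comm_self.eq
  rw [ContinuousLinearMap.star_eq_adjoint] at hc
  have h1 : ContinuousLinearMap.adjoint A (A y) = 0 := by
    rw [← @inner_self_eq_zero ℂ]
    rw [ContinuousLinearMap.adjoint_inner_left]
    have : A (ContinuousLinearMap.adjoint A (A y)) = 0 := by
      have := DFunLike.congr_fun hc.symm (A y)
      simp only [ContinuousLinearMap.mul_apply] at this
      rw [this, h, map_zero]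
    rw [this, inner_zero_right]
  rw [← @inner_self_eq_zero ℂ, ← ContinuousLinearMap.adjoint_inner_left, h1, inner_zero_left]

/-- If `T²` and `T³` are normal and `ran T = ran T²`, then `T` is normal. -/
theorem normal_of_sq_cube_normal_of_dsc_one
    {H : Type*} [NormedAddCommGroup H] [InnerProductSpace ℂ H] [CompleteSpace H]
    (T : H →L[ℂ] H)
    (h2 : IsStarNormal (T ^ 2))
    (h3 : IsStarNormal (T ^ 3))
    (hdsc : LinearMap.range (T : H →ₗ[ℂ] H) = LinearMap.range ((T ^ 2 : H →L[ℂ] H) : H →ₗ[ℂ] H)) :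
    IsStarNormal T := by
  -- Fuglede's theorem applied to `T²` and `T³`
  have fug2 : Commute (star (T ^ 2)) T := fuglede_commute h2 ((Commute.refl T).pow_left 2)
  have fug3 : Commute (star (T ^ 3)) T := fuglede_commute h3 ((Commute.refl T).pow_left 3)
  rw [star_pow] at fug2 fug3
  set D : H →L[ℂ] H := T * star T - star T * T with hD
  -- the self-commutator `D` satisfies `D * (star T)² = 0`, hence `T² * D = 0`
  have k1 : T * star T * star T ^ 2 = star T ^ 3 * T := by
    rw [mul_assoc, ← pow_succ' (star T) 2]
    exact fug3.eq.symm
  have k2 : star T * T * star T ^ 2 = star T ^ 3 * T := by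
    rw [mul_assoc, ← fug2.eq, ← mul_assoc, ← pow_succ' (star T) 2]
  have h0 : D * star T ^ 2 = 0 := by rw [hD, sub_mul, k1, k2, sub_self]
  have hstarD : star D = D := by simp only [hD, star_sub, star_mul, star_star]
  have hTTD : T ^ 2 * D = 0 := by
    have := congrArg star h0
    rwa [star_mul, star_pow, star_star, hstarD, star_zero] at this
  -- `ker T² = ker T`
  have hker2 : ∀ x : H, T (T x) = 0 → T x = 0 := by
    intro x hx
    have hmem : T x ∈ LinearMap.range ((T ^ 2 : H →L[ℂ] H) : H →ₗ[ℂ] H) :=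
      hdsc ▸ LinearMap.mem_range_self (T : H →ₗ[ℂ] H) x
    obtain ⟨y, hy⟩ := hmem
    have hy' : T (T y) = T x := by
      rw [← hy]; simp [sq, ContinuousLinearMap.mul_apply]
    have h4 : (T ^ 2) ((T ^ 2) y) = 0 := by
      simp only [sq, ContinuousLinearMap.mul_apply]
      calc T (T (T (T y))) = T (T (T x)) := by rw [← hy']
        _ = T 0 := by rw [hx]
        _ = 0 := map_zero T
    have h5 : (T ^ 2) y = 0 := normal_apply_apply_eq_zero h2 h4
    rw [← hy]
    simpa [sq, Module.End.mul_apply] using h5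
  -- `ran D ⊆ ker T`
  have hDker : ∀ x : H, T (D x) = 0 := by
    intro x
    apply hker2
    have := DFunLike.congr_fun hTTD x
    simpa only [sq, ContinuousLinearMap.mul_apply, ContinuousLinearMap.zero_apply] using this
  -- `D` vanishes on `ker T`
  have hkerD0 : ∀ x : H, T x = 0 → D x = 0 := by
    intro x hx
    have hDx : D x = T (star T x) := by
      simp [hD, ContinuousLinearMap.sub_apply, ContinuousLinearMap.mul_apply, hx]
    have : T (T (star T x)) = 0 := by rw [← hDx]; exact hDker x
    rw [hDx]
    exact hker2 _ this
  have hDD : ∀ x : H, D (D x) = 0 := fun x => hkerD0 (D x) (hDker x)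
  -- conclude `D = 0`
  have hDzero : D = 0 := by
    ext x
    rw [ContinuousLinearMap.zero_apply, ← @inner_self_eq_zero ℂ,
      ← ContinuousLinearMap.adjoint_inner_right, ← ContinuousLinearMap.star_eq_adjoint,
      hstarD, hDD x, inner_zero_right]
  have h9 : T * star T - star T * T = 0 := by rw [← hD]; exact hDzero
  exact ⟨(sub_eq_zero.mp h9).symm⟩
end

section
/- There exists a bounded linear operator T on a (nonzero) complex Hilbert space, namely T = e^{iπ/3}·I, such that T is bijective, T⁶ is positive, and Re(T⁷) ≥ 0, but T is not positive. Hence the pair of exponents (2, 2k+1) in the positivity criterion cannot be replaced by an arbitrary pair of coprime exponents (p, q) with p, q ≥ 2. -/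
/-!
`ζ = e^{iπ/3}` is a primitive sixth root of unity, so `(ζ • 1)⁶ = 1` is positive and
`(ζ • 1)⁷ = ζ • 1` is accretive because `Re ζ = 1/2`; but `ζ • 1` is not positive since `ζ` is
not a nonnegative real.
-/

open Complex ContinuousLinearMap Real
open scoped ComplexOrder

theorem ContinuousLinearMap.bijective_smul_one {𝕜 M : Type*} [Field 𝕜] [TopologicalSpace M]
    [AddCommGroup M] [Module 𝕜 M] [ContinuousConstSMul 𝕜 M] {c : 𝕜} (hc : c ≠ 0) :
    Function.Bijective (c • 1 : M →L[𝕜] M) :=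
  MulAction.bijective (Units.mk0 c hc)

section InnerProductSpace

variable {𝕜 E : Type*} [RCLike 𝕜] [NormedAddCommGroup E] [InnerProductSpace 𝕜 E]

theorem ContinuousLinearMap.isPositive_smul_one_iff [Nontrivial E] {c : 𝕜} :
    (c • 1 : E →L[𝕜] E).IsPositive ↔ 0 ≤ c := by
  rw [← isPositive_toLinearMap_iff]
  exact LinearMap.isPositive_one.isPositive_smul_iff one_ne_zero

theorem ContinuousLinearMap.re_inner_smul_one_apply_self (c : 𝕜) (x : E) :
    RCLike.re (inner 𝕜 ((c • 1 : E →L[𝕜] E) x) x) = RCLike.re c * ‖x‖ ^ 2 := by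
  rw [smul_apply, one_apply_eq_self, inner_smul_left, inner_self_eq_norm_sq_to_K]
  norm_cast
  rw [RCLike.re_mul_ofReal, RCLike.conj_re]

end InnerProductSpace

theorem exp_pi_div_three_mul_I_pow_six : exp (π / 3 * I) ^ 6 = 1 := by
  rw [← Complex.exp_nat_mul, ← exp_two_pi_mul_I]
  congr 1
  push_cast
  ring

theorem exp_pi_div_three_mul_I_re : (exp (π / 3 * I)).re = 1 / 2 := by
  rw [← ofReal_ofNat, ← ofReal_div, exp_ofReal_mul_I_re, cos_pi_div_three]

theorem not_nonneg_exp_pi_div_three_mul_I : ¬ 0 ≤ exp (π / 3 * I) := by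
  rw [← ofReal_ofNat, ← ofReal_div, nonneg_iff, exp_ofReal_mul_I_im, sin_pi_div_three]
  rintro ⟨-, h⟩
  have : (0 : ℝ) < √3 := by positivity
  linarith

/-- On any nonzero complex Hilbert space, the operator `T = e^{iπ/3}·I` is bijective,
`T⁶` is positive and `Re(T⁷) ≥ 0`, yet `T` is not positive. Hence the pair of exponents
`(2, 2k+1)` in the positivity criterion cannot be replaced by arbitrary coprime
exponents `(p, q)` with `p, q ≥ 2`. -/
theorem exists_bijective_sixth_power_positive_seventh_accretive_not_positive
    {H : Type*} [NormedAddCommGroup H] [InnerProductSpace ℂ H] [CompleteSpace H]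
    [Nontrivial H] :
    ∃ T : H →L[ℂ] H,
      T = Complex.exp (Real.pi / 3 * Complex.I) • (1 : H →L[ℂ] H) ∧
      Function.Bijective T ∧
      (T ^ 6).IsPositive ∧
      (∀ x : H, 0 ≤ (inner ℂ ((T ^ 7) x) x : ℂ).re) ∧
      ¬ T.IsPositive := by
  set ζ := exp (π / 3 * I)
  have hζ6 : ζ ^ 6 = 1 := exp_pi_div_three_mul_I_pow_six
  refine ⟨ζ • 1, rfl, bijective_smul_one (exp_ne_zero _), ?_, fun x => ?_,
    isPositive_smul_one_iff.not.mpr not_nonneg_exp_pi_div_three_mul_I⟩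
  · rw [smul_pow, one_pow, hζ6, one_smul]
    exact isPositive_one
  · rw [smul_pow, one_pow, pow_succ, hζ6, one_mul, ← RCLike.re_to_complex,
      re_inner_smul_one_apply_self, RCLike.re_to_complex, exp_pi_div_three_mul_I_re]
    positivity
end
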